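/- Individual rationality of the VCG mechanism: if every fleet bids truthfully (b(j) = c(j) for each of its contracts j), then for every fleet n, the VCG payment payment^n = SocSave_{−n}(J*) − SocSave(J*_{−n}) is at least the total cost ∑_{j ∈ J*ₙ} c(j)·ℓ(j) of the accepted contracts J*ₙ of fleet n. -/
import Mathlib

/-- Individual rationality of the VCG mechanism under truthful bidding
(`b = c`): each fleet's payment covers the total cost of its accepted
contracts. -/
theorem stmt7 {ι : Type*} [DecidableEq ι] (Offered : Finset ι)
    (fleet : ι → ℕ) (n : ℕ) (Feasible : Finset ι → Prop)
    (ℓ c m : ι → ℝ) (hℓ : ∀ j, 0 ≤ ℓ j) (hc : ∀ j, 0 ≤ c j)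
    (Jstar Jminus : Finset ι)
    (hJ1 : Jstar ⊆ Offered) (hJ2 : Feasible Jstar)
    (hJmax : ∀ J ⊆ Offered, Feasible J →
      ∑ j ∈ J, (m j - c j) * ℓ j ≤ ∑ j ∈ Jstar, (m j - c j) * ℓ j)
    (hK1 : Jminus ⊆ Offered.filter (fun j => fleet j ≠ n))
    (hK2 : Feasible Jminus)
    (hKmax : ∀ J ⊆ Offered.filter (fun j => fleet j ≠ n), Feasible J →
      ∑ j ∈ J, (m j - c j) * ℓ j ≤ ∑ j ∈ Jminus, (m j - c j) * ℓ j) :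
    ∑ j ∈ Jstar.filter (fun j => fleet j = n), c j * ℓ j ≤
      (∑ j ∈ Jstar, (m j - c j) * ℓ j
        + ∑ j ∈ Jstar.filter (fun j => fleet j = n), c j * ℓ j)
      - ∑ j ∈ Jminus, (m j - c j) * ℓ j := by
  have h := hJmax Jminus (hK1.trans (Finset.filter_subset _ _)) hK2
  linarith
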